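/- The max-relative entropy satisfies the triangle-type property under tensoring: for states ρ₁, σ₁ on H₁ and ρ₂, σ₂ on H₂, D_max(ρ₁ ⊗ ρ₂ || σ₁ ⊗ σ₂) = D_max(ρ₁||σ₁) + D_max(ρ₂||σ₂). -/

import Mathlib

/-!
Let `S(ρ, σ) = {λ ≥ 0 | ρ ≤ λσ}`. Testing `ρ ≤ λσ` on vectors shows that `S(ρ, σ)` is closed, so
its infimum `μ(ρ, σ)` is attained, and `μ(ρ, σ) > 0` as soon as `ρ ≠ 0`. The splitting
`λ₁λ₂ σ₁ ⊗ σ₂ - ρ₁ ⊗ ρ₂ = (λ₁σ₁ - ρ₁) ⊗ λ₂σ₂ + ρ₁ ⊗ (λ₂σ₂ - ρ₂)` gives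
`μ(ρ₁ ⊗ ρ₂, σ₁ ⊗ σ₂) ≤ μ(ρ₁, σ₁) μ(ρ₂, σ₂)`. Conversely, testing `ρ₁ ⊗ ρ₂ ≤ λ σ₁ ⊗ σ₂` on product
vectors `v ⊗ x` gives `⟨x, ρ₂ x⟩ ρ₁ ≤ λ ⟨x, σ₂ x⟩ σ₁`, hence `μ(ρ₁, σ₁) ⟨x, ρ₂ x⟩ ≤ λ ⟨x, σ₂ x⟩`
for every `x`, i.e. `λ / μ(ρ₁, σ₁) ∈ S(ρ₂, σ₂)`. This yields the reverse inequality, and also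
that `S(ρ₁ ⊗ ρ₂, σ₁ ⊗ σ₂)` is empty exactly when one of the factor sets is, which is the `+∞`
case of the additivity.
-/

open Matrix
open scoped ComplexOrder Classical Kronecker

/-- The max-relative entropy `D_max(ρ‖σ) = log₂ inf{λ ≥ 0 : ρ ≤ λσ}`, with value
`+∞` if no such `λ` exists. -/
noncomputable def Dmax {n : Type} [Fintype n] [DecidableEq n]
    (ρ σ : Matrix n n ℂ) : EReal :=
  if _h : {l : ℝ | 0 ≤ l ∧ ((l : ℝ) • σ - ρ).PosSemidef}.Nonempty then
    ((Real.logb 2 (sInf {l : ℝ | 0 ≤ l ∧ ((l : ℝ) • σ - ρ).PosSemidef}) : ℝ) : EReal)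
  else ⊤

namespace Matrix

variable {𝕜 n m : Type*} [RCLike 𝕜] [Fintype n] [Fintype m]

def dominatingScalars (ρ σ : Matrix n n 𝕜) : Set ℝ :=
  {l : ℝ | 0 ≤ l ∧ (l • σ - ρ).PosSemidef}

lemma re_star_dotProduct_smul_sub_mulVec (l : ℝ) (ρ σ : Matrix n n 𝕜) (x : n → 𝕜) :
    RCLike.re (star x ⬝ᵥ (l • σ - ρ) *ᵥ x) =
      l * RCLike.re (star x ⬝ᵥ σ *ᵥ x) - RCLike.re (star x ⬝ᵥ ρ *ᵥ x) := by
  simp [sub_mulVec, smul_mulVec, dotProduct_sub, dotProduct_smul, RCLike.smul_re]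

lemma re_le_of_mem_dominatingScalars {ρ σ : Matrix n n 𝕜} {l : ℝ}
    (hl : l ∈ dominatingScalars ρ σ) (x : n → 𝕜) :
    RCLike.re (star x ⬝ᵥ ρ *ᵥ x) ≤ l * RCLike.re (star x ⬝ᵥ σ *ᵥ x) := by
  have hnonneg := (RCLike.nonneg_iff.mp (hl.2.dotProduct_mulVec_nonneg x)).1
  rw [re_star_dotProduct_smul_sub_mulVec] at hnonneg
  linarith

lemma mem_dominatingScalars_iff {ρ σ : Matrix n n 𝕜} (hρ : ρ.IsHermitian) (hσ : σ.IsHermitian)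
    {l : ℝ} : l ∈ dominatingScalars ρ σ ↔
      0 ≤ l ∧ ∀ x, RCLike.re (star x ⬝ᵥ ρ *ᵥ x) ≤ l * RCLike.re (star x ⬝ᵥ σ *ᵥ x) := by
  refine ⟨fun hl ↦ ⟨hl.1, re_le_of_mem_dominatingScalars hl⟩, fun ⟨hl, hle⟩ ↦ ⟨hl, ?_⟩⟩
  have hherm : (l • σ - ρ).IsHermitian := (hσ.smul (IsSelfAdjoint.all l)).sub hρ
  refine .of_dotProduct_mulVec_nonneg hherm fun x ↦ RCLike.nonneg_iff.mpr ⟨?_, ?_⟩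
  · rw [re_star_dotProduct_smul_sub_mulVec]
    linarith [hle x]
  · exact hherm.im_star_dotProduct_mulVec_self x

lemma isClosed_dominatingScalars {ρ σ : Matrix n n 𝕜} (hρ : ρ.IsHermitian)
    (hσ : σ.IsHermitian) : IsClosed (dominatingScalars ρ σ) := by
  have : dominatingScalars ρ σ = Set.Ici 0 ∩ ⋂ x : n → 𝕜,
      {l | RCLike.re (star x ⬝ᵥ ρ *ᵥ x) ≤ l * RCLike.re (star x ⬝ᵥ σ *ᵥ x)} := by
    ext l
    simp [mem_dominatingScalars_iff hρ hσ]
  rw [this]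
  exact isClosed_Ici.inter <| isClosed_iInter fun x ↦
    isClosed_le continuous_const (continuous_id.mul continuous_const)

lemma sInf_mem_dominatingScalars {ρ σ : Matrix n n 𝕜} (hρ : ρ.IsHermitian) (hσ : σ.IsHermitian)
    (h : (dominatingScalars ρ σ).Nonempty) : sInf (dominatingScalars ρ σ) ∈ dominatingScalars ρ σ :=
  (isClosed_dominatingScalars hρ hσ).csInf_mem h ⟨0, fun _ hl ↦ hl.1⟩

open scoped MatrixOrder in
lemma sInf_dominatingScalars_pos {ρ σ : Matrix n n 𝕜} (hρ : ρ.PosSemidef) (hρ0 : ρ ≠ 0)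
    (hσ : σ.IsHermitian) (h : (dominatingScalars ρ σ).Nonempty) :
    0 < sInf (dominatingScalars ρ σ) := by
  have hmem := sInf_mem_dominatingScalars hρ.isHermitian hσ h
  refine hmem.1.lt_of_ne fun h0 ↦ hρ0 ?_
  have hneg : ρ ≤ 0 := by simpa [le_iff, ← h0] using hmem.2
  exact le_antisymm hneg hρ.nonneg

lemma PosSemidef.exists_re_dotProduct_pos {ρ : Matrix n n 𝕜} (hρ : ρ.PosSemidef) (h0 : ρ ≠ 0) :
    ∃ x, 0 < RCLike.re (star x ⬝ᵥ ρ *ᵥ x) := by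
  by_contra! hle
  refine h0 (ext_iff_mulVec.mpr fun x ↦ ?_)
  rw [zero_mulVec, ← hρ.dotProduct_mulVec_zero_iff]
  exact RCLike.ext (by simpa using le_antisymm (hle x) (hρ.re_dotProduct_nonneg x))
    (by simpa using hρ.isHermitian.im_star_dotProduct_mulVec_self x)

variable {ρ₁ σ₁ : Matrix n n 𝕜} {ρ₂ σ₂ : Matrix m m 𝕜}

lemma mul_mem_dominatingScalars_kronecker (hρ₁ : ρ₁.PosSemidef) (hσ₂ : σ₂.PosSemidef) {l₁ l₂ : ℝ}
    (h₁ : l₁ ∈ dominatingScalars ρ₁ σ₁) (h₂ : l₂ ∈ dominatingScalars ρ₂ σ₂) :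
    l₁ * l₂ ∈ dominatingScalars (ρ₁ ⊗ₖ ρ₂) (σ₁ ⊗ₖ σ₂) := by
  refine ⟨mul_nonneg h₁.1 h₂.1, ?_⟩
  have hsplit : (l₁ * l₂) • (σ₁ ⊗ₖ σ₂) - ρ₁ ⊗ₖ ρ₂ =
      (l₁ • σ₁ - ρ₁) ⊗ₖ (l₂ • σ₂) + ρ₁ ⊗ₖ (l₂ • σ₂ - ρ₂) := by
    ext
    simp only [sub_apply, add_apply, smul_apply, kroneckerMap_apply, RCLike.real_smul_eq_coe_mul]
    push_cast
    ring
  rw [hsplit]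
  exact (h₁.2.kronecker (hσ₂.smul h₂.1)).add (hρ₁.kronecker h₂.2)

lemma star_dotProduct_kronecker_mulVec {R : Type*} [CommSemiring R] [StarRing R]
    (A : Matrix n n R) (B : Matrix m m R) (v : n → R) (x : m → R) :
    star (fun p : n × m ↦ v p.1 * x p.2) ⬝ᵥ (A ⊗ₖ B) *ᵥ (fun p : n × m ↦ v p.1 * x p.2) =
      (star v ⬝ᵥ A *ᵥ v) * (star x ⬝ᵥ B *ᵥ x) := by
  simp only [mulVec, dotProduct, Fintype.sum_prod_type, Finset.sum_mul_sum]
  refine Finset.sum_congr rfl fun i _ ↦ Finset.sum_congr rfl fun j _ ↦ ?_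
  simp only [kroneckerMap_apply, Finset.mul_sum, Finset.sum_mul, Pi.star_apply, star_mul']
  rw [Finset.sum_comm]
  refine Finset.sum_congr rfl fun k _ ↦ Finset.sum_congr rfl fun l _ ↦ ?_
  ring

lemma mem_dominatingScalars_of_mem_kronecker (hρ₁ : ρ₁.IsHermitian) (hσ₁ : σ₁.IsHermitian)
    (hρ₂ : ρ₂.IsHermitian) (hσ₂ : σ₂.PosSemidef) {l : ℝ}
    (hl : l ∈ dominatingScalars (ρ₁ ⊗ₖ ρ₂) (σ₁ ⊗ₖ σ₂)) {x : m → 𝕜}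
    (hx : 0 < RCLike.re (star x ⬝ᵥ ρ₂ *ᵥ x)) :
    l * RCLike.re (star x ⬝ᵥ σ₂ *ᵥ x) / RCLike.re (star x ⬝ᵥ ρ₂ *ᵥ x) ∈
      dominatingScalars ρ₁ σ₁ := by
  refine (mem_dominatingScalars_iff hρ₁ hσ₁).mpr
    ⟨div_nonneg (mul_nonneg hl.1 (hσ₂.re_dotProduct_nonneg x)) hx.le, fun v ↦ ?_⟩
  have hvx := re_le_of_mem_dominatingScalars hl (fun p ↦ v p.1 * x p.2)
  simp only [star_dotProduct_kronecker_mulVec, RCLike.mul_re,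
    hρ₂.im_star_dotProduct_mulVec_self, hσ₂.isHermitian.im_star_dotProduct_mulVec_self,
    mul_zero, sub_zero] at hvx
  rw [div_mul_eq_mul_div, le_div_iff₀ hx]
  linarith

lemma div_sInf_mem_dominatingScalars_of_mem_kronecker (hρ₁ : ρ₁.PosSemidef) (hρ₁0 : ρ₁ ≠ 0)
    (hσ₁ : σ₁.IsHermitian) (hρ₂ : ρ₂.IsHermitian) (hσ₂ : σ₂.PosSemidef)
    (h₁ : (dominatingScalars ρ₁ σ₁).Nonempty) {l : ℝ}
    (hl : l ∈ dominatingScalars (ρ₁ ⊗ₖ ρ₂) (σ₁ ⊗ₖ σ₂)) :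
    l / sInf (dominatingScalars ρ₁ σ₁) ∈ dominatingScalars ρ₂ σ₂ := by
  have hμ := sInf_dominatingScalars_pos hρ₁ hρ₁0 hσ₁ h₁
  refine (mem_dominatingScalars_iff hρ₂ hσ₂.isHermitian).mpr
    ⟨div_nonneg hl.1 hμ.le, fun x ↦ ?_⟩
  have hs := hσ₂.re_dotProduct_nonneg x
  rcases lt_or_ge 0 (RCLike.re (star x ⬝ᵥ ρ₂ *ᵥ x)) with hx | hx
  · have hle := csInf_le ⟨0, fun _ hl ↦ hl.1⟩
      (mem_dominatingScalars_of_mem_kronecker hρ₁.isHermitian hσ₁ hρ₂ hσ₂ hl hx)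
    rw [le_div_iff₀ hx] at hle
    rw [div_mul_eq_mul_div, le_div_iff₀ hμ]
    linarith
  · exact hx.trans (mul_nonneg (div_nonneg hl.1 hμ.le) hs)

lemma nonempty_dominatingScalars_kronecker_iff (hρ₁ : ρ₁.PosSemidef) (hρ₁0 : ρ₁ ≠ 0)
    (hσ₁ : σ₁.PosSemidef) (hρ₂ : ρ₂.PosSemidef) (hρ₂0 : ρ₂ ≠ 0) (hσ₂ : σ₂.PosSemidef) :
    (dominatingScalars (ρ₁ ⊗ₖ ρ₂) (σ₁ ⊗ₖ σ₂)).Nonempty ↔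
      (dominatingScalars ρ₁ σ₁).Nonempty ∧ (dominatingScalars ρ₂ σ₂).Nonempty := by
  refine ⟨fun ⟨l, hl⟩ ↦ ?_, fun ⟨⟨l₁, h₁⟩, ⟨l₂, h₂⟩⟩ ↦
    ⟨l₁ * l₂, mul_mem_dominatingScalars_kronecker hρ₁ hσ₂ h₁ h₂⟩⟩
  obtain ⟨x, hx⟩ := hρ₂.exists_re_dotProduct_pos hρ₂0
  have h₁ : (dominatingScalars ρ₁ σ₁).Nonempty := ⟨_, mem_dominatingScalars_of_mem_kronecker
    hρ₁.isHermitian hσ₁.isHermitian hρ₂.isHermitian hσ₂ hl hx⟩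
  exact ⟨h₁, _, div_sInf_mem_dominatingScalars_of_mem_kronecker hρ₁ hρ₁0 hσ₁.isHermitian
    hρ₂.isHermitian hσ₂ h₁ hl⟩

lemma sInf_dominatingScalars_kronecker (hρ₁ : ρ₁.PosSemidef) (hρ₁0 : ρ₁ ≠ 0)
    (hσ₁ : σ₁.PosSemidef) (hρ₂ : ρ₂.PosSemidef) (hσ₂ : σ₂.PosSemidef)
    (h₁ : (dominatingScalars ρ₁ σ₁).Nonempty) (h₂ : (dominatingScalars ρ₂ σ₂).Nonempty) :
    sInf (dominatingScalars (ρ₁ ⊗ₖ ρ₂) (σ₁ ⊗ₖ σ₂)) =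
      sInf (dominatingScalars ρ₁ σ₁) * sInf (dominatingScalars ρ₂ σ₂) := by
  have hμ₁ := sInf_dominatingScalars_pos hρ₁ hρ₁0 hσ₁.isHermitian h₁
  have hmul := mul_mem_dominatingScalars_kronecker hρ₁ hσ₂
    (sInf_mem_dominatingScalars hρ₁.isHermitian hσ₁.isHermitian h₁)
    (sInf_mem_dominatingScalars hρ₂.isHermitian hσ₂.isHermitian h₂)
  refine le_antisymm (csInf_le ⟨0, fun _ hl ↦ hl.1⟩ hmul) (le_csInf ⟨_, hmul⟩ fun l hl ↦ ?_)
  have hle := csInf_le ⟨0, fun _ hl ↦ hl.1⟩ <| div_sInf_mem_dominatingScalars_of_mem_kronecker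
    hρ₁ hρ₁0 hσ₁.isHermitian hρ₂.isHermitian hσ₂ h₁ hl
  rwa [le_div_iff₀ hμ₁, mul_comm] at hle

end Matrix

lemma Dmax_eq_logb_sInf {n : Type} [Fintype n] [DecidableEq n] {ρ σ : Matrix n n ℂ}
    (h : (dominatingScalars ρ σ).Nonempty) :
    Dmax ρ σ = Real.logb 2 (sInf (dominatingScalars ρ σ)) :=
  dif_pos h

lemma Dmax_eq_top {n : Type} [Fintype n] [DecidableEq n] {ρ σ : Matrix n n ℂ}
    (h : ¬(dominatingScalars ρ σ).Nonempty) : Dmax ρ σ = ⊤ :=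
  dif_neg h

lemma Dmax_ne_bot {n : Type} [Fintype n] [DecidableEq n] (ρ σ : Matrix n n ℂ) : Dmax ρ σ ≠ ⊥ := by
  unfold Dmax
  split <;> simp

variable {n₁ n₂ : Type} [Fintype n₁] [DecidableEq n₁] [Fintype n₂] [DecidableEq n₂]

/-- Additivity of the max-relative entropy under tensoring:
`D_max(ρ₁ ⊗ ρ₂ ‖ σ₁ ⊗ σ₂) = D_max(ρ₁‖σ₁) + D_max(ρ₂‖σ₂)`. -/
theorem Dmax_kronecker
    (ρ₁ σ₁ : Matrix n₁ n₁ ℂ) (ρ₂ σ₂ : Matrix n₂ n₂ ℂ)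
    (hρ₁ : ρ₁.PosSemidef) (hρ₁tr : ρ₁.trace = 1)
    (hρ₂ : ρ₂.PosSemidef) (hρ₂tr : ρ₂.trace = 1)
    (hσ₁ : σ₁.PosSemidef) (hσ₂ : σ₂.PosSemidef) :
    Dmax (ρ₁ ⊗ₖ ρ₂) (σ₁ ⊗ₖ σ₂) = Dmax ρ₁ σ₁ + Dmax ρ₂ σ₂ := by
  have hρ₁0 : ρ₁ ≠ 0 := by rintro rfl; simp at hρ₁tr
  have hρ₂0 : ρ₂ ≠ 0 := by rintro rfl; simp at hρ₂tr
  have hne := nonempty_dominatingScalars_kronecker_iff hρ₁ hρ₁0 hσ₁ hρ₂ hρ₂0 hσ₂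
  by_cases h : (dominatingScalars ρ₁ σ₁).Nonempty ∧ (dominatingScalars ρ₂ σ₂).Nonempty
  · obtain ⟨h₁, h₂⟩ := h
    rw [Dmax_eq_logb_sInf (hne.mpr ⟨h₁, h₂⟩), Dmax_eq_logb_sInf h₁, Dmax_eq_logb_sInf h₂,
      sInf_dominatingScalars_kronecker hρ₁ hρ₁0 hσ₁ hρ₂ hσ₂ h₁ h₂,
      Real.logb_mul (sInf_dominatingScalars_pos hρ₁ hρ₁0 hσ₁.isHermitian h₁).ne'
        (sInf_dominatingScalars_pos hρ₂ hρ₂0 hσ₂.isHermitian h₂).ne', EReal.coe_add]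
  · rw [Dmax_eq_top (hne.not.mpr h)]
    rcases not_and_or.mp h with h₁ | h₂
    · rw [Dmax_eq_top h₁, EReal.top_add_of_ne_bot (Dmax_ne_bot _ _)]
    · rw [Dmax_eq_top h₂, EReal.add_top_of_ne_bot (Dmax_ne_bot _ _)]
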